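/- arXiv:2406.00963 — 2 statements merged into one kernel-verified Lean document; each statement's English description precedes it below -/
import Mathlib

section
/- For all subsets I, J ⊆ {1,…,n} and every totally positive n×n matrix A, both of the following hold: per(A_{I∪J,I∪J})·per(A_{I∩J,I∩J}) ≤ |I∪J|!·|I∩J|!·per(A_{I,I})·per(A_{J,J}), and per(A_{I,I})·per(A_{J,J}) ≤ |I|!·|J|!·per(A_{I∪J,I∪J})·per(A_{I∩J,I∩J}). -/
open Matrix BigOperators

/-- The permanent of a square real matrix. -/
def per {r : ℕ} (B : Matrix (Fin r) (Fin r) ℝ) : ℝ :=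
  ∑ σ : Equiv.Perm (Fin r), ∏ i, B i (σ i)

/-- An `n × n` real matrix is totally positive if all its minors are positive. -/
def TotallyPos {n : ℕ} (A : Matrix (Fin n) (Fin n) ℝ) : Prop :=
  ∀ (k : ℕ) (f g : Fin k → Fin n), StrictMono f → StrictMono g →
    0 < (A.submatrix f g).det

/-- The elements of a finset of `Fin n`, listed in increasing order. -/
def finEmb {n : ℕ} (I : Finset (Fin n)) : Fin I.card → Fin n :=
  fun i => ((I.orderIsoOfFin rfl) i : Fin n)

/-! For a totally positive matrix every product `∏ i, A i (σ i)` is at most the diagonal product: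
if `k < l` but `σ l < σ k`, swapping the two values can only increase the product, since the
`2 × 2` minor on rows `k, l` and columns `σ l, σ k` is positive. Hence each principal permanent
`per A[S,S]` lies between `d S` and `#S ! * d S`, where `d S = ∏ x ∈ S, A x x`, while
`d (I ∪ J) * d (I ∩ J) = d I * d J` exactly. -/

open Equiv Finset

section Uncrossing

variable {ι : Type*} [Fintype ι] [LinearOrder ι] {B : Matrix ι ι ℝ}

lemma prod_le_prod_swap_mul (h0 : ∀ i j, 0 ≤ B i j)
    (h2 : ∀ i i' j j', i < i' → j < j' → B i j' * B i' j ≤ B i j * B i' j')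
    (σ : Perm ι) {k l : ι} (hkl : k < l) (hσ : σ l < σ k) :
    ∏ i, B i (σ i) ≤ ∏ i, B i ((swap (σ k) (σ l) * σ) i) := by
  have hl : l ∈ univ.erase k := mem_erase.mpr ⟨hkl.ne', mem_univ l⟩
  rw [← mul_prod_erase univ _ (mem_univ k), ← mul_prod_erase _ _ hl,
    ← mul_prod_erase univ _ (mem_univ k), ← mul_prod_erase _ _ hl]
  have hrest : ∏ i ∈ (univ.erase k).erase l, B i ((swap (σ k) (σ l) * σ) i) =
      ∏ i ∈ (univ.erase k).erase l, B i (σ i) := by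
    refine prod_congr rfl fun i hi => ?_
    obtain ⟨hil, hik⟩ : i ≠ l ∧ i ≠ k := by simpa using hi
    rw [Perm.mul_apply, swap_apply_of_ne_of_ne (σ.injective.ne hik) (σ.injective.ne hil)]
  rw [hrest, Perm.mul_apply, Perm.mul_apply, swap_apply_left, swap_apply_right, ← mul_assoc,
    ← mul_assoc]
  exact mul_le_mul_of_nonneg_right (h2 k l (σ l) (σ k) hkl hσ)
    (prod_nonneg fun i _ => h0 _ _)

lemma prod_le_prod_diag (h0 : ∀ i j, 0 ≤ B i j)
    (h2 : ∀ i i' j j', i < i' → j < j' → B i j' * B i' j ≤ B i j * B i' j')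
    (σ : Perm ι) : ∏ i, B i (σ i) ≤ ∏ i, B i i := by
  induction hs : #σ.support using Nat.strong_induction_on generalizing σ with
  | _ s ih =>
    rcases σ.support.eq_empty_or_nonempty with hσ | hσ
    · simp [Perm.support_eq_empty_iff.mp hσ]
    -- The least moved point `i` lies below both `σ i` and `σ⁻¹ i`, so the rows `i`, `σ⁻¹ i` cross;
    -- uncrossing them fixes `i` and shrinks the support.
    set i := σ.support.min' hσ
    have hi : i ∈ σ.support := min'_mem _ _
    have hσi : σ i ≠ i := Perm.mem_support.mp hi
    have hσσ : σ (σ⁻¹ i) = i := σ.apply_symm_apply i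
    have hinv : σ⁻¹ i ∈ σ.support := by rwa [← Perm.apply_mem_support, hσσ]
    have hlt : i < σ i :=
      lt_of_le_of_ne (min'_le _ _ (Perm.apply_mem_support.mpr hi)) hσi.symm
    have hlt' : i < σ⁻¹ i :=
      lt_of_le_of_ne (min'_le _ _ hinv) fun h => hσi (by rwa [← h] at hσσ)
    calc ∏ j, B j (σ j)
        ≤ ∏ j, B j ((swap (σ i) (σ (σ⁻¹ i)) * σ) j) :=
          prod_le_prod_swap_mul h0 h2 σ hlt' (by rwa [hσσ])
      _ = ∏ j, B j ((swap i (σ i) * σ) j) := by rw [hσσ, Equiv.swap_comm]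
      _ ≤ ∏ j, B j j := ih _ (hs ▸ Perm.card_support_swap_mul hσi) _ rfl

end Uncrossing

section Permanent

variable {r : ℕ} {B : Matrix (Fin r) (Fin r) ℝ}

lemma prod_diag_le_per (h0 : ∀ i j, 0 ≤ B i j) : ∏ i, B i i ≤ per B :=
  single_le_sum (f := fun σ : Perm (Fin r) => ∏ i, B i (σ i))
    (fun _ _ => prod_nonneg fun _ _ => h0 _ _) (mem_univ 1)

lemma per_le_factorial_mul_prod_diag (h0 : ∀ i j, 0 ≤ B i j)
    (h2 : ∀ i i' j j', i < i' → j < j' → B i j' * B i' j ≤ B i j * B i' j') :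
    per B ≤ r.factorial * ∏ i, B i i := by
  calc per B ≤ ∑ _σ : Perm (Fin r), ∏ i, B i i :=
        sum_le_sum fun σ _ => prod_le_prod_diag h0 h2 σ
    _ = r.factorial * ∏ i, B i i := by
        rw [sum_const, card_univ, Fintype.card_perm, Fintype.card_fin, nsmul_eq_mul]

end Permanent

namespace TotallyPos

variable {n : ℕ} {A : Matrix (Fin n) (Fin n) ℝ}

lemma submatrix (hA : TotallyPos A) {r : ℕ} {f : Fin r → Fin n} (hf : StrictMono f) :
    TotallyPos (A.submatrix f f) := fun k g g' hg hg' => by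
  simpa only [submatrix_submatrix] using hA k (f ∘ g) (f ∘ g') (hf.comp hg) (hf.comp hg')

lemma entry_pos (hA : TotallyPos A) (i j : Fin n) : 0 < A i j := by
  simpa [det_fin_one] using
    hA 1 (fun _ => i) (fun _ => j) (Subsingleton.strictMono _) (Subsingleton.strictMono _)

lemma antidiag_le_diag (hA : TotallyPos A) {i i' j j' : Fin n} (hi : i < i') (hj : j < j') :
    A i j' * A i' j ≤ A i j * A i' j' := by
  have hmono {a b : Fin n} (h : a < b) : StrictMono ![a, b] := by
    rw [Fin.strictMono_iff_lt_succ]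
    intro k
    fin_cases k
    simpa using h
  have h := hA 2 _ _ (hmono hi) (hmono hj)
  rw [det_fin_two] at h
  simp only [submatrix_apply, cons_val_zero, cons_val_one] at h
  linarith

lemma per_le_factorial_mul_prod_diag (hA : TotallyPos A) :
    per A ≤ n.factorial * ∏ i, A i i :=
  _root_.per_le_factorial_mul_prod_diag (fun i j => (hA.entry_pos i j).le)
    fun _ _ _ _ => hA.antidiag_le_diag

lemma prod_diag_le_per (hA : TotallyPos A) : ∏ i, A i i ≤ per A :=
  _root_.prod_diag_le_per fun i j => (hA.entry_pos i j).le

end TotallyPos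

lemma finEmb_strictMono {n : ℕ} (S : Finset (Fin n)) : StrictMono (finEmb S) :=
  (S.orderIsoOfFin rfl).strictMono

lemma prod_finEmb {n : ℕ} (S : Finset (Fin n)) (g : Fin n → ℝ) :
    ∏ i, g (finEmb S i) = ∏ x ∈ S, g x := by
  rw [← prod_coe_sort S g]
  exact Equiv.prod_comp (S.orderIsoOfFin rfl).toEquiv (fun x : S => g x)

section PrincipalMinors

variable {n : ℕ} {A : Matrix (Fin n) (Fin n) ℝ}

lemma TotallyPos.prod_diag_le_per_principal (hA : TotallyPos A) (S : Finset (Fin n)) :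
    ∏ x ∈ S, A x x ≤ per (A.submatrix (finEmb S) (finEmb S)) := by
  simpa only [← prod_finEmb S fun x => A x x, submatrix_apply] using
    (hA.submatrix (finEmb_strictMono S)).prod_diag_le_per

lemma TotallyPos.per_principal_le (hA : TotallyPos A) (S : Finset (Fin n)) :
    per (A.submatrix (finEmb S) (finEmb S)) ≤ (#S).factorial * ∏ x ∈ S, A x x := by
  simpa only [← prod_finEmb S fun x => A x x, submatrix_apply] using
    (hA.submatrix (finEmb_strictMono S)).per_le_factorial_mul_prod_diag

lemma TotallyPos.per_principal_mul_le (hA : TotallyPos A) {S T S' T' : Finset (Fin n)}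
    (h : (∏ x ∈ S, A x x) * ∏ x ∈ T, A x x = (∏ x ∈ S', A x x) * ∏ x ∈ T', A x x) :
    per (A.submatrix (finEmb S) (finEmb S)) * per (A.submatrix (finEmb T) (finEmb T)) ≤
      ((#S).factorial * (#T).factorial : ℝ) *
        (per (A.submatrix (finEmb S') (finEmb S')) *
          per (A.submatrix (finEmb T') (finEmb T'))) := by
  have hdiag (U : Finset (Fin n)) : 0 < ∏ x ∈ U, A x x := prod_pos fun x _ => hA.entry_pos x x
  have hper (U : Finset (Fin n)) : 0 < per (A.submatrix (finEmb U) (finEmb U)) :=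
    (hdiag U).trans_le (hA.prod_diag_le_per_principal U)
  calc per (A.submatrix (finEmb S) (finEmb S)) * per (A.submatrix (finEmb T) (finEmb T))
      ≤ ((#S).factorial * ∏ x ∈ S, A x x) * ((#T).factorial * ∏ x ∈ T, A x x) :=
        mul_le_mul (hA.per_principal_le S) (hA.per_principal_le T) (hper T).le
          (by positivity [hdiag S])
    _ = ((#S).factorial * (#T).factorial : ℝ) * ((∏ x ∈ S', A x x) * ∏ x ∈ T', A x x) := by
        rw [← h]; ring
    _ ≤ _ := mul_le_mul_of_nonneg_left
        (mul_le_mul (hA.prod_diag_le_per_principal S') (hA.prod_diag_le_per_principal T')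
          (hdiag T').le (hper S').le) (by positivity)

end PrincipalMinors

theorem stmt8 (n : ℕ) (I J : Finset (Fin n)) (A : Matrix (Fin n) (Fin n) ℝ)
    (hA : TotallyPos A) :
    (per (A.submatrix (finEmb (I ∪ J)) (finEmb (I ∪ J))) *
        per (A.submatrix (finEmb (I ∩ J)) (finEmb (I ∩ J))) ≤
      (Nat.factorial (I ∪ J).card : ℝ) * (Nat.factorial (I ∩ J).card : ℝ) *
        (per (A.submatrix (finEmb I) (finEmb I)) *
          per (A.submatrix (finEmb J) (finEmb J)))) ∧
    (per (A.submatrix (finEmb I) (finEmb I)) * per (A.submatrix (finEmb J) (finEmb J)) ≤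
      (Nat.factorial I.card : ℝ) * (Nat.factorial J.card : ℝ) *
        (per (A.submatrix (finEmb (I ∪ J)) (finEmb (I ∪ J))) *
          per (A.submatrix (finEmb (I ∩ J)) (finEmb (I ∩ J))))) := by
  have h : (∏ x ∈ I ∪ J, A x x) * ∏ x ∈ I ∩ J, A x x = (∏ x ∈ I, A x x) * ∏ x ∈ J, A x x :=
    prod_union_inter
  exact ⟨hA.per_principal_mul_le h, hA.per_principal_mul_le h.symm⟩
end

section
/- For every totally nonnegative 3×3 matrix A = (a_{i,j}), 2·a_{1,1}·a_{2,2}·a_{3,3} ≥ a_{1,2}·a_{2,3}·a_{3,1} + a_{1,3}·a_{2,1}·a_{3,2}. -/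
/-
Only the three 2 × 2 minors with rows/columns {1,2}×{1,2}, {2,3}×{1,3} and {1,3}×{2,3} are
needed: multiplying them by the entries a₃₃, a₁₂ and a₂₁ gives
a₁₂a₂₃a₃₁ ≤ a₁₂a₂₁a₃₃, a₁₃a₂₁a₃₂ ≤ a₁₂a₂₁a₃₃ and a₁₂a₂₁a₃₃ ≤ a₁₁a₂₂a₃₃, which add up to the claim.
-/

open Matrix BigOperators

/-- An `n × n` real matrix is totally nonnegative if all its minors are nonnegative. -/
def TotallyNonneg {n : ℕ} (A : Matrix (Fin n) (Fin n) ℝ) : Prop :=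
  ∀ (k : ℕ) (f g : Fin k → Fin n), StrictMono f → StrictMono g →
    0 ≤ (A.submatrix f g).det

namespace TotallyNonneg

variable {n : ℕ} {A : Matrix (Fin n) (Fin n) ℝ}

theorem entry_nonneg (hA : TotallyNonneg A) (i j : Fin n) : 0 ≤ A i j := by
  have h := hA 1 ![i] ![j] (Subsingleton.strictMono _) (Subsingleton.strictMono _)
  rw [det_fin_one] at h
  simpa using h

theorem minor_two_nonneg (hA : TotallyNonneg A) {i j c d : Fin n} (hij : i < j) (hcd : c < d) :
    A i d * A j c ≤ A i c * A j d := by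
  have h := hA 2 ![i, j] ![c, d] (by simpa using hij) (by simpa using hcd)
  rw [det_fin_two] at h
  simpa using h

end TotallyNonneg

theorem stmt12 (A : Matrix (Fin 3) (Fin 3) ℝ) (hA : TotallyNonneg A) :
    A 0 1 * A 1 2 * A 2 0 + A 0 2 * A 1 0 * A 2 1 ≤ 2 * (A 0 0 * A 1 1 * A 2 2) := by
  have h₁ : A 0 1 * A 1 2 * A 2 0 ≤ A 0 1 * A 1 0 * A 2 2 := by
    rw [mul_assoc, mul_assoc]
    exact mul_le_mul_of_nonneg_left (hA.minor_two_nonneg (by decide) (by decide))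
      (hA.entry_nonneg 0 1)
  have h₂ : A 0 2 * A 1 0 * A 2 1 ≤ A 0 1 * A 1 0 * A 2 2 := by
    have := mul_le_mul_of_nonneg_left (hA.minor_two_nonneg (i := 0) (j := 2) (c := 1) (d := 2)
      (by decide) (by decide)) (hA.entry_nonneg 1 0)
    linarith
  have h₃ : A 0 1 * A 1 0 * A 2 2 ≤ A 0 0 * A 1 1 * A 2 2 :=
    mul_le_mul_of_nonneg_right (hA.minor_two_nonneg (by decide) (by decide))
      (hA.entry_nonneg 2 2)
  linarith
end
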